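/- arXiv:2501.05169 — 2 statements merged into one kernel-verified Lean document; each statement's English description precedes it below -/
import Mathlib

section
/- Let (N, K, v) be an incomplete cooperative game with K intersection-closed and N ∈ K. Then there exists a unique function δ : 2^N → ℝ satisfying (1) Σ_{T ⊆ S} δ(T) = v(S) for every S ∈ K, and (2) δ(S) = δ(T) whenever c_K(S) = c_K(T). Consequently the UD-value Φ^K(v) is uniquely determined. -/
open Finset

variable {α : Type*} [Fintype α] [DecidableEq α]

/-- A set system is intersection-closed if it is closed under pairwise intersections. -/
def InterClosed (K : Finset (Finset α)) : Prop :=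
  ∀ S ∈ K, ∀ T ∈ K, S ∩ T ∈ K

/-- The closure `c_K(T) = ⋂ {S ∈ K : T ⊆ S}` of a coalition `T` in the set system `K`. -/
def cl (K : Finset (Finset α)) (T : Finset α) : Finset α :=
  (K.filter fun S => T ⊆ S).inf id

/-- The family `C(T)` of coalitions indistinguishable from `T`. -/
def classOf (K : Finset (Finset α)) (T : Finset α) : Finset (Finset α) :=
  Finset.univ.filter fun X => cl K X = cl K T

/-- The Harsanyi dividend `d_w(S) = w S - ∑_{T ⊊ S} d_w(T)`. -/
noncomputable def dividend (w : Finset α → ℝ) (S : Finset α) : ℝ :=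
  w S - ∑ T ∈ (S.powerset.erase S).attach, dividend w T.1
termination_by S.card
decreasing_by
  have h := T.2
  simp only [mem_erase, mem_powerset] at h
  exact Finset.card_lt_card (h.2.ssubset_of_ne h.1)

/-- The surplus `Δ_v(S) = v S - ∑_{T ∈ K, T ⊊ S} Δ_v(T)` for `S ∈ K`. -/
noncomputable def Delta (K : Finset (Finset α)) (v : Finset α → ℝ) (S : Finset α) : ℝ :=
  v S - ∑ T ∈ (K.filter fun T => T ⊂ S).attach, Delta K v T.1
termination_by S.card
decreasing_by
  have h := T.2
  simp only [mem_filter] at h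
  exact Finset.card_lt_card h.2

/-- A δ-system for the incomplete game `(N, K, v)`. -/
def IsDeltaSystem (K : Finset (Finset α)) (v δ : Finset α → ℝ) : Prop :=
  (∀ S ∈ K, ∑ T ∈ S.powerset, δ T = v S) ∧
  ∀ S T : Finset α, cl K S = cl K T → δ S = δ T

/-- The payoff `Φ_i = ∑_{S ∋ i} δ(S)/|S|` computed from a dividend function `δ`. -/
noncomputable def UDofDelta (δ : Finset α → ℝ) (i : α) : ℝ :=
  ∑ S ∈ Finset.univ.filter (fun S => i ∈ S), δ S / S.card

/-- The complete game whose Harsanyi dividends are `δ`. -/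
def gameOf (δ : Finset α → ℝ) (S : Finset α) : ℝ := ∑ T ∈ S.powerset, δ T

/-- A P-extension: a positive cooperative game agreeing with `v` on `K`. -/
def PExtension (K : Finset (Finset α)) (v w : Finset α → ℝ) : Prop :=
  w ∅ = 0 ∧ (∀ S, 0 ≤ dividend w S) ∧ ∀ S ∈ K, w S = v S

/-- P-extendability of an incomplete game. -/
def PExtendable (K : Finset (Finset α)) (v : Finset α → ℝ) : Prop :=
  ∃ w, PExtension K v w

/-- The Shapley value `φ_i(w) = ∑_{S ∋ i} d_w(S)/|S|`. -/
noncomputable def shapley (w : Finset α → ℝ) (i : α) : ℝ :=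
  ∑ S ∈ Finset.univ.filter (fun S => i ∈ S), dividend w S / S.card

section Aux

variable {K : Finset (Finset α)} {v : Finset α → ℝ}

lemma my_inf_mem (hIC : InterClosed K) :
    ∀ {s : Finset (Finset α)}, s.Nonempty → s ⊆ K → s.inf id ∈ K := by
  intro s hs
  induction hs using Finset.Nonempty.cons_induction with
  | singleton a => intro h; simpa using h (by simp)
  | cons a s ha hs ih =>
      intro h
      rw [Finset.inf_cons]
      have h1 : a ∈ K := h (Finset.mem_cons_self a s)
      have h2 : s.inf id ∈ K := ih fun x hx => h (Finset.mem_cons.2 (Or.inr hx))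
      simpa [Finset.inf_eq_inter] using hIC a h1 _ h2

lemma my_subset_cl (K : Finset (Finset α)) (T : Finset α) : T ⊆ cl K T := by
  show T ≤ (K.filter fun S => T ⊆ S).inf id
  exact Finset.le_inf fun S hS => (mem_filter.1 hS).2

lemma my_cl_subset {S T : Finset α} (hS : S ∈ K) (h : T ⊆ S) : cl K T ⊆ S := by
  have := Finset.inf_le (f := id) (b := S)
    (s := K.filter fun S' => T ⊆ S') (mem_filter.2 ⟨hS, h⟩)
  exact this

lemma my_cl_mem (hIC : InterClosed K) (hN : (Finset.univ : Finset α) ∈ K)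
    (T : Finset α) : cl K T ∈ K :=
  my_inf_mem hIC ⟨univ, mem_filter.2 ⟨hN, subset_univ T⟩⟩ (filter_subset _ _)

lemma my_cl_closed {S : Finset α} (hS : S ∈ K) : cl K S = S :=
  Finset.Subset.antisymm (my_cl_subset hS Finset.Subset.rfl) (my_subset_cl K S)

lemma my_cl_cl (hIC : InterClosed K) (hN : (Finset.univ : Finset α) ∈ K)
    (T : Finset α) : cl K (cl K T) = cl K T :=
  my_cl_closed (my_cl_mem hIC hN T)

lemma my_classOf_eq {C : Finset α} (hC : C ∈ K) :
    classOf K C = Finset.univ.filter (fun X => cl K X = C) := by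
  unfold classOf; rw [my_cl_closed hC]

lemma my_classOf_card_pos (K : Finset (Finset α)) (C : Finset α) :
    0 < (classOf K C).card :=
  card_pos.2 ⟨C, mem_filter.2 ⟨mem_univ _, rfl⟩⟩

lemma my_fiber_eq {S C : Finset α} (hC : C ∈ K) (hCS : C ⊆ S) :
    S.powerset.filter (fun T => cl K T = C) = classOf K C := by
  rw [my_classOf_eq hC]
  ext T
  simp only [mem_filter, mem_powerset, mem_univ, true_and]
  constructor
  · rintro ⟨-, h⟩; exact h
  · intro h
    exact ⟨(my_subset_cl K T).trans ((h ▸ Finset.Subset.rfl : cl K T ⊆ C).trans hCS), h⟩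

lemma my_sum_powerset (hIC : InterClosed K) (hN : (Finset.univ : Finset α) ∈ K)
    {S : Finset α} (hS : S ∈ K) (δ : Finset α → ℝ)
    (hδ : ∀ T, δ T = δ (cl K T)) :
    ∑ T ∈ S.powerset, δ T
      = ∑ C ∈ K.filter (· ⊆ S), ((classOf K C).card : ℝ) * δ C := by
  have hmaps : ∀ T ∈ S.powerset, cl K T ∈ K.filter (· ⊆ S) := by
    intro T hT
    rw [mem_powerset] at hT
    exact mem_filter.2 ⟨my_cl_mem hIC hN T, my_cl_subset hS hT⟩
  rw [← Finset.sum_fiberwise_of_maps_to hmaps δ]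
  refine Finset.sum_congr rfl fun C hC => ?_
  obtain ⟨hCK, hCS⟩ := mem_filter.1 hC
  rw [my_fiber_eq hCK hCS]
  have : ∀ T ∈ classOf K C, δ T = δ C := by
    intro T hT
    rw [my_classOf_eq hCK] at hT
    have hclT : cl K T = C := (mem_filter.1 hT).2
    rw [hδ T, hclT]
  rw [Finset.sum_congr rfl this, Finset.sum_const, nsmul_eq_mul]

lemma my_filter_subset_eq {S : Finset α} (hS : S ∈ K) :
    K.filter (· ⊆ S) = insert S (K.filter (· ⊂ S)) := by
  ext T
  simp only [mem_filter, mem_insert]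
  constructor
  · rintro ⟨hT, hTS⟩
    rcases eq_or_ne T S with rfl | hne
    · exact Or.inl rfl
    · exact Or.inr ⟨hT, hTS.ssubset_of_ne hne⟩
  · rintro (rfl | ⟨hT, hTS⟩)
    · exact ⟨hS, Finset.Subset.rfl⟩
    · exact ⟨hT, hTS.subset⟩

lemma my_S_not_mem {S : Finset α} : S ∉ K.filter (· ⊂ S) := by
  intro h
  exact ssubset_irrefl S (mem_filter.1 h).2

lemma my_sum_Delta {S : Finset α} (hS : S ∈ K) :
    ∑ C ∈ K.filter (· ⊆ S), Delta K v C = v S := by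
  rw [my_filter_subset_eq hS, Finset.sum_insert my_S_not_mem]
  rw [Delta, Finset.sum_attach]
  ring

lemma my_key (hIC : InterClosed K) (hN : (Finset.univ : Finset α) ∈ K)
    {δ : Finset α → ℝ} (hδ : IsDeltaSystem K v δ) :
    ∀ C : Finset α, C ∈ K → ((classOf K C).card : ℝ) * δ C = Delta K v C := by
  intro C
  induction C using Finset.strongInduction with
  | _ C ih =>
    intro hC
    have hconst : ∀ T, δ T = δ (cl K T) := fun T => hδ.2 T (cl K T) (my_cl_cl hIC hN T).symm
    have h1 := hδ.1 C hC
    rw [my_sum_powerset hIC hN hC δ hconst, my_filter_subset_eq hC,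
      Finset.sum_insert my_S_not_mem] at h1
    have h2 : ∑ C' ∈ K.filter (· ⊂ C), ((classOf K C').card : ℝ) * δ C'
        = ∑ C' ∈ K.filter (· ⊂ C), Delta K v C' :=
      Finset.sum_congr rfl fun C' hC' => by
        obtain ⟨h1', h2'⟩ := mem_filter.1 hC'
        exact ih C' h2' h1'
    rw [Delta, Finset.sum_attach]
    linarith

end Aux

/-- for an intersection-closed incomplete game there is a unique δ-system;
consequently the UD-value is uniquely determined. -/
theorem deltaSystem_existsUnique (K : Finset (Finset α))
    (hIC : InterClosed K) (hempty : ∅ ∈ K) (hN : (Finset.univ : Finset α) ∈ K)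
    (v : Finset α → ℝ) (hv : v ∅ = 0) :
    (∃! δ : Finset α → ℝ, IsDeltaSystem K v δ) ∧
      ∀ δ₁ δ₂ : Finset α → ℝ, IsDeltaSystem K v δ₁ → IsDeltaSystem K v δ₂ →
        ∀ i : α, UDofDelta δ₁ i = UDofDelta δ₂ i := by
  set δ₀ : Finset α → ℝ :=
    fun T => Delta K v (cl K T) / ((classOf K (cl K T)).card : ℝ) with hδ₀def
  have hconst₀ : ∀ T, δ₀ T = δ₀ (cl K T) := by
    intro T; simp only [hδ₀def, my_cl_cl hIC hN T]
  have hexist : IsDeltaSystem K v δ₀ := by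
    constructor
    · intro S hS
      rw [my_sum_powerset hIC hN hS δ₀ hconst₀, ← my_sum_Delta hS (v := v)]
      refine Finset.sum_congr rfl fun C hC => ?_
      obtain ⟨hCK, -⟩ := mem_filter.1 hC
      have hne : ((classOf K C).card : ℝ) ≠ 0 :=
        Nat.cast_ne_zero.2 (my_classOf_card_pos K C).ne'
      simp only [hδ₀def, my_cl_closed hCK]
      rw [mul_comm, div_mul_cancel₀ _ hne]
    · intro S T h
      simp only [hδ₀def, h]
  have huniq : ∀ δ : Finset α → ℝ, IsDeltaSystem K v δ → δ = δ₀ := by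
    intro δ hδ
    funext T
    have h := my_key hIC hN hδ (cl K T) (my_cl_mem hIC hN T)
    have hne : ((classOf K (cl K T)).card : ℝ) ≠ 0 :=
      Nat.cast_ne_zero.2 (my_classOf_card_pos K (cl K T)).ne'
    have hT : δ T = δ (cl K T) := hδ.2 T (cl K T) (my_cl_cl hIC hN T).symm
    rw [hT, hδ₀def, eq_div_iff hne, mul_comm]
    exact h
  have hEU : ∃! δ : Finset α → ℝ, IsDeltaSystem K v δ :=
    ⟨δ₀, hexist, huniq⟩
  refine ⟨hEU, fun δ₁ δ₂ h1 h2 i => ?_⟩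
  rw [hEU.unique h1 h2]
end

section
/- The UD-value does not satisfy the Fairness axiom: there exist a finite player set N, an intersection-closed set system K ⊆ 2^N with ∅, N ∈ K, a coalition S ∈ K with S ≠ N such that K \ {S} is also intersection-closed with ∅, N ∈ K \ {S}, a characteristic function v, and players i, j ∈ S with Φ_i^K(v) − Φ_i^{K \ {S}}(v) ≠ Φ_j^K(v) − Φ_j^{K \ {S}}(v). In particular this holds for N = {1,2,3}, K = {∅, {1}, {1,2}, {1,2,3}}, v({1,2,3}) = 1 and v(T) = 0 for all other T ∈ K, S = {1,2}, i = 1, j = 2. -/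
open Finset

variable {α : Type*} [Fintype α] [DecidableEq α]

/-- The set system of Example 1 (players 1,2,3 encoded as `0,1,2 : Fin 3`):
`K = {∅, {1}, {1,2}, {1,2,3}}`. -/
def K16 : Finset (Finset (Fin 3)) := {∅, {0}, {0, 1}, Finset.univ}

/-- the UD-value violates Fairness: for `N = {1,2,3}`,
`K = {∅, {1}, {1,2}, N}`, `v(N) = 1` and `v = 0` on the other known coalitions,
removing `S = {1,2}` affects players `1` and `2` differently. -/
theorem ud_not_fair :
    InterClosed K16 ∧ ∅ ∈ K16 ∧ Finset.univ ∈ K16 ∧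
    ({0, 1} : Finset (Fin 3)) ∈ K16 ∧ ({0, 1} : Finset (Fin 3)) ≠ Finset.univ ∧
    InterClosed (K16.erase {0, 1}) ∧ ∅ ∈ K16.erase {0, 1} ∧
    Finset.univ ∈ K16.erase {0, 1} ∧
    (0 : Fin 3) ∈ ({0, 1} : Finset (Fin 3)) ∧ (1 : Fin 3) ∈ ({0, 1} : Finset (Fin 3)) ∧
    ∀ v : Finset (Fin 3) → ℝ, v Finset.univ = 1 →
      (∀ T ∈ K16, T ≠ Finset.univ → v T = 0) →
      ∀ δ δ' : Finset (Fin 3) → ℝ,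
        IsDeltaSystem K16 v δ → IsDeltaSystem (K16.erase {0, 1}) v δ' →
        UDofDelta δ 0 - UDofDelta δ' 0 ≠ UDofDelta δ 1 - UDofDelta δ' 1 := by
  refine ⟨by unfold InterClosed; decide, by decide, by decide, by decide, by decide,
    by unfold InterClosed; decide, by decide, by decide, by decide, by decide, ?_⟩
  intro v hvN hv0 δ δ' hδ hδ'
  obtain ⟨h1, h2⟩ := hδ
  obtain ⟨h1', h2'⟩ := hδ'
  -- values of v on small coalitions
  have hv_e : v ∅ = 0 := hv0 ∅ (by decide) (by decide)
  have hv_0 : v {0} = 0 := hv0 {0} (by decide) (by decide)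
  have hv_01 : v ({0,1} : Finset (Fin 3)) = 0 := hv0 {0,1} (by decide) (by decide)
  -- powerset computations
  have pe : (∅ : Finset (Fin 3)).powerset = ({∅} : Finset (Finset (Fin 3))) := by decide
  have p0 : ({0} : Finset (Fin 3)).powerset = ({∅, {0}} : Finset (Finset (Fin 3))) := by decide
  have p01 : ({0,1} : Finset (Fin 3)).powerset
      = ({∅, {0}, {1}, {0,1}} : Finset (Finset (Fin 3))) := by decide
  have pN : (Finset.univ : Finset (Fin 3)).powerset
      = ({∅, {0}, {1}, {2}, {0,1}, {0,2}, {1,2}, Finset.univ} : Finset (Finset (Fin 3))) := by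
    decide
  -- δ on K16
  have e_e : δ ∅ = 0 := by
    have := h1 ∅ (by decide); rw [pe, Finset.sum_singleton, hv_e] at this; exact this
  have e_0 : δ {0} = 0 := by
    have := h1 {0} (by decide)
    rw [p0] at this
    simp (config := { decide := true }) [Finset.sum_insert, Finset.sum_singleton] at this
    rw [hv_0, e_e] at this; linarith
  have e_1eq : δ {1} = δ ({0,1} : Finset (Fin 3)) := h2 {1} {0,1} (by decide)
  have e_01 : δ ({0,1} : Finset (Fin 3)) = 0 := by
    have := h1 {0,1} (by decide)
    rw [p01] at this
    simp (config := { decide := true }) [Finset.sum_insert, Finset.sum_singleton] at this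
    rw [hv_01, e_e, e_0, e_1eq] at this; linarith
  have e_1 : δ ({1} : Finset (Fin 3)) = 0 := by rw [e_1eq, e_01]
  have e_02eq : δ ({0,2} : Finset (Fin 3)) = δ ({2} : Finset (Fin 3)) :=
    h2 {0,2} {2} (by decide)
  have e_12eq : δ ({1,2} : Finset (Fin 3)) = δ ({2} : Finset (Fin 3)) :=
    h2 {1,2} {2} (by decide)
  have e_Neq : δ (Finset.univ : Finset (Fin 3)) = δ ({2} : Finset (Fin 3)) :=
    h2 Finset.univ {2} (by decide)
  have e_2 : δ ({2} : Finset (Fin 3)) = 1/4 := by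
    have := h1 Finset.univ (by decide)
    rw [pN] at this
    simp (config := { decide := true }) [Finset.sum_insert, Finset.sum_singleton] at this
    rw [hvN, e_e, e_0, e_1, e_01, e_02eq, e_12eq, e_Neq] at this; linarith
  -- δ' on K16 \ {0,1}
  have f_e : δ' ∅ = 0 := by
    have := h1' ∅ (by decide); rw [pe, Finset.sum_singleton, hv_e] at this; exact this
  have f_0 : δ' {0} = 0 := by
    have := h1' {0} (by decide)
    rw [p0] at this
    simp (config := { decide := true }) [Finset.sum_insert, Finset.sum_singleton] at this
    rw [hv_0, f_e] at this; linarith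
  have f_1eq : δ' ({1} : Finset (Fin 3)) = δ' ({2} : Finset (Fin 3)) :=
    h2' {1} {2} (by decide)
  have f_01eq : δ' ({0,1} : Finset (Fin 3)) = δ' ({2} : Finset (Fin 3)) :=
    h2' {0,1} {2} (by decide)
  have f_02eq : δ' ({0,2} : Finset (Fin 3)) = δ' ({2} : Finset (Fin 3)) :=
    h2' {0,2} {2} (by decide)
  have f_12eq : δ' ({1,2} : Finset (Fin 3)) = δ' ({2} : Finset (Fin 3)) :=
    h2' {1,2} {2} (by decide)
  have f_Neq : δ' (Finset.univ : Finset (Fin 3)) = δ' ({2} : Finset (Fin 3)) :=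
    h2' Finset.univ {2} (by decide)
  have f_2 : δ' ({2} : Finset (Fin 3)) = 1/6 := by
    have := h1' Finset.univ (by decide)
    rw [pN] at this
    simp (config := { decide := true }) [Finset.sum_insert, Finset.sum_singleton] at this
    rw [hvN, f_e, f_0, f_1eq, f_01eq, f_02eq, f_12eq, f_Neq] at this; linarith
  -- compute the four UD values
  have filt0 : Finset.univ.filter (fun S => (0 : Fin 3) ∈ S)
      = ({{0}, {0,1}, {0,2}, Finset.univ} : Finset (Finset (Fin 3))) := by decide
  have filt1 : Finset.univ.filter (fun S => (1 : Fin 3) ∈ S)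
      = ({{1}, {0,1}, {1,2}, Finset.univ} : Finset (Finset (Fin 3))) := by decide
  have c1 : (({0} : Finset (Fin 3)).card : ℝ) = 1 := by norm_num
  have c1' : (({1} : Finset (Fin 3)).card : ℝ) = 1 := by norm_num
  have c01 : (({0,1} : Finset (Fin 3)).card : ℝ) = 2 := by
    rw [show ({0,1} : Finset (Fin 3)).card = 2 from by decide]; norm_num
  have c02 : (({0,2} : Finset (Fin 3)).card : ℝ) = 2 := by
    rw [show ({0,2} : Finset (Fin 3)).card = 2 from by decide]; norm_num
  have c12 : (({1,2} : Finset (Fin 3)).card : ℝ) = 2 := by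
    rw [show ({1,2} : Finset (Fin 3)).card = 2 from by decide]; norm_num
  have cN : ((Finset.univ : Finset (Fin 3)).card : ℝ) = 3 := by norm_num
  have u0 : UDofDelta δ 0 = 5/24 := by
    unfold UDofDelta
    rw [filt0]
    rw [Finset.sum_insert (by decide), Finset.sum_insert (by decide),
      Finset.sum_insert (by decide), Finset.sum_singleton]
    rw [e_0, e_01, e_02eq, e_Neq, e_2, c01, c02, cN, c1]; norm_num
  have u1 : UDofDelta δ 1 = 5/24 := by
    unfold UDofDelta
    rw [filt1]
    rw [Finset.sum_insert (by decide), Finset.sum_insert (by decide),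
      Finset.sum_insert (by decide), Finset.sum_singleton]
    rw [e_1, e_01, e_12eq, e_Neq, e_2, c01, c12, cN, c1']; norm_num
  have u0' : UDofDelta δ' 0 = 2/9 := by
    unfold UDofDelta
    rw [filt0]
    rw [Finset.sum_insert (by decide), Finset.sum_insert (by decide),
      Finset.sum_insert (by decide), Finset.sum_singleton]
    rw [f_0, f_01eq, f_02eq, f_Neq, f_2, c01, c02, cN, c1]; norm_num
  have u1' : UDofDelta δ' 1 = 7/18 := by
    unfold UDofDelta
    rw [filt1]
    rw [Finset.sum_insert (by decide), Finset.sum_insert (by decide),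
      Finset.sum_insert (by decide), Finset.sum_singleton]
    rw [f_1eq, f_01eq, f_12eq, f_Neq, f_2, c01, c12, cN, c1']; norm_num
  rw [u0, u1, u0', u1']
  norm_num
end
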